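/- (Proposition 1, combined form) Let z ~ N(μ_z, σ_z²) with σ_z² > 0 and let z̃ ~ N(p·μ_z, p·(σ_z² + (1−p)·S)) with p ∈ (0,1] and S ≥ 0. Then D_KL(z ‖ z̃) ≤ (1/2)[ p + 1/p − 2 + p(1−p)·S/σ_z² + (1−p)²·μ_z²/(p·σ_z²) ]. -/

import Mathlib

open Real

/-- Closed form of the KL divergence between Gaussians `N(μ, v)` and `N(μ', v')`. -/
noncomputable def klGauss (μ v μ' v' : ℝ) : ℝ :=
  (1 / 2) * (Real.log (v' / v) + (v + (μ - μ') ^ 2) / v' - 1)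

/-! `log x ≤ x - 1` removes the logarithm, and lowering the variance of `z̃` to `p σ_z²` only
enlarges the quadratic term; the bound is then an algebraic identity. -/

theorem klGauss_le_of_le {μ v μ' v' w : ℝ} (hv : 0 < v) (hw : 0 < w) (hwv' : w ≤ v') :
    klGauss μ v μ' v' ≤ (1 / 2) * (v' / v - 2 + (v + (μ - μ') ^ 2) / w) := by
  have hlog : Real.log (v' / v) ≤ v' / v - 1 :=
    Real.log_le_sub_one_of_pos (div_pos (hw.trans_le hwv') hv)
  have hquad : (v + (μ - μ') ^ 2) / v' ≤ (v + (μ - μ') ^ 2) / w :=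
    div_le_div_of_nonneg_left (by positivity) hw hwv'
  unfold klGauss
  linarith

/-- Proposition 1, combined form: for `z ~ N(μz, σz²)` and
`z̃ ~ N(p·μz, p·(σz² + (1−p)·S))`, the KL divergence is bounded by
`(1/2)[p + 1/p − 2 + p(1−p)S/σz² + (1−p)²μz²/(pσz²)]`. -/
theorem packed_ensembles_proposition_one (μz vz S p : ℝ)
    (hv : 0 < vz) (hp0 : 0 < p) (hp1 : p ≤ 1) (hS : 0 ≤ S) :
    klGauss μz vz (p * μz) (p * (vz + (1 - p) * S))
      ≤ (1 / 2) * (p + 1 / p - 2 + p * (1 - p) * S / vz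
          + (1 - p) ^ 2 * μz ^ 2 / (p * vz)) := by
  have hvar : p * vz ≤ p * (vz + (1 - p) * S) :=
    mul_le_mul_of_nonneg_left
      (le_add_of_nonneg_right (mul_nonneg (sub_nonneg.2 hp1) hS)) hp0.le
  calc klGauss μz vz (p * μz) (p * (vz + (1 - p) * S))
      ≤ (1 / 2) * (p * (vz + (1 - p) * S) / vz - 2 + (vz + (μz - p * μz) ^ 2) / (p * vz)) :=
        klGauss_le_of_le hv (mul_pos hp0 hv) hvar
    _ = (1 / 2) * (p + 1 / p - 2 + p * (1 - p) * S / vz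
          + (1 - p) ^ 2 * μz ^ 2 / (p * vz)) := by
        field_simp
        ring
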